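/- Let G be a balanced bipartite graph with 2n vertices and X its reduced adjacency matrix. Then the following are equivalent: (i) G is α⁺-stable; (ii) X has a nonzero diagonal; (iii) the term rank ρ(X) equals n; (iv) per(X) > 0. -/

import Mathlib

open SimpleGraph

/-- A stable (independent) set of vertices: pairwise nonadjacent. -/
def IsStableSet {V : Type*} (G : SimpleGraph V) (S : Set V) : Prop :=
  S.Pairwise fun u v => ¬ G.Adj u v

/-- The stability number `α(G)`: maximum cardinality of a stable set. -/
noncomputable def stabNum {V : Type*} (G : SimpleGraph V) : ℕ :=
  sSup {k | ∃ S : Set V, IsStableSet G S ∧ S.ncard = k}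

/-- A maximum stable set. -/
def IsMaxStableSet {V : Type*} (G : SimpleGraph V) (S : Set V) : Prop :=
  IsStableSet G S ∧ S.ncard = stabNum G

/-- `G` is α⁺-stable: adding any edge between nonadjacent vertices keeps α. -/
def AlphaPlusStable {V : Type*} (G : SimpleGraph V) : Prop :=
  ∀ x y : V, x ≠ y → ¬ G.Adj x y →
    stabNum (G ⊔ SimpleGraph.fromEdgeSet {s(x, y)}) = stabNum G

/-- `G` is α⁻-stable: deleting any edge keeps α. -/
def AlphaMinusStable {V : Type*} (G : SimpleGraph V) : Prop :=
  ∀ e ∈ G.edgeSet, stabNum (G.deleteEdges {e}) = stabNum G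

/-- `G` is α-stable: both α⁺-stable and α⁻-stable. -/
def AlphaStable {V : Type*} (G : SimpleGraph V) : Prop :=
  AlphaPlusStable G ∧ AlphaMinusStable G

/-- `{A, B}` is a bipartition of `G`. -/
def IsBipartition {V : Type*} (G : SimpleGraph V) (A B : Set V) : Prop :=
  Disjoint A B ∧ A ∪ B = Set.univ ∧
    ∀ ⦃x y⦄, G.Adj x y → (x ∈ A ∧ y ∈ B) ∨ (x ∈ B ∧ y ∈ A)

/-- `G` is bistable bipartite w.r.t. bipartition `{A, B}`:
`A` and `B` are its only maximum stable sets. -/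
def BistableBipartite {V : Type*} (G : SimpleGraph V) (A B : Set V) : Prop :=
  IsBipartition G A B ∧ ∀ S : Set V, IsMaxStableSet G S ↔ S = A ∨ S = B

/-- `G` has a perfect matching. -/
def HasPerfectMatching {V : Type*} (G : SimpleGraph V) : Prop :=
  ∃ M : G.Subgraph, M.IsPerfectMatching

/-- `X` has a `k` by `n - k` zero submatrix for some `1 ≤ k ≤ n - 1`. -/
def HasZeroSubmatrix {m : Type*} [Fintype m] (X : Matrix m m ℕ) : Prop :=
  ∃ R C : Finset m, R.Nonempty ∧ C.Nonempty ∧ R.card + C.card = Fintype.card m ∧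
    ∀ i ∈ R, ∀ j ∈ C, X i j = 0

/-- A square matrix is partly decomposable. -/
def PartlyDecomposable {m : Type*} [Fintype m] (X : Matrix m m ℕ) : Prop :=
  (Fintype.card m = 1 ∧ ∀ i j, X i j = 0) ∨ HasZeroSubmatrix X

/-- A square matrix is fully indecomposable iff it is not partly decomposable. -/
def FullyIndecomposable {m : Type*} [Fintype m] (X : Matrix m m ℕ) : Prop :=
  ¬ PartlyDecomposable X

/-- A (0,1)-matrix. -/
def ZeroOne {m k : Type*} (X : Matrix m k ℕ) : Prop :=
  ∀ i j, X i j = 0 ∨ X i j = 1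

/-- The term rank: maximal number of nonzero entries, no two on a line. -/
noncomputable def termRank {m k : Type*} [Fintype m] [Fintype k] (X : Matrix m k ℕ) : ℕ :=
  sSup {r | ∃ (f : Fin r ↪ m) (g : Fin r ↪ k), ∀ i, X (f i) (g i) ≠ 0}

/-- The permanent of a square matrix with natural entries. -/
def perm {m : Type*} [Fintype m] [DecidableEq m] (X : Matrix m m ℕ) : ℕ :=
  ∑ σ : Equiv.Perm m, ∏ i, X (σ i) i

/-- The bipartite graph whose reduced adjacency matrix is the (0,1)-matrix `X`. -/
def matGraph {ι κ : Type*} (X : Matrix ι κ ℕ) : SimpleGraph (ι ⊕ κ) :=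
  SimpleGraph.fromRel fun u v => ∃ i j, u = Sum.inl i ∧ v = Sum.inr j ∧ X i j = 1

/-! `X` has a nonzero diagonal iff the bipartite graph `G` of `X` has a perfect matching, iff
(Hall) the deficiency `d = max_R (|R| - |N(R)|)` over sets `R` of rows vanishes; by König,
`α(G) = n + d`. A finite graph is α⁺-stable iff for any two distinct nonadjacent vertices some
maximum stable set misses one of them. If `d = 0`, the two sides are disjoint maximum stable sets.
If `d > 0`, the row sets attaining the deficiency are closed under `∪` and `∩` (submodularity of
`|N(·)|`), and every maximum stable set consists of such a row set `R` together with the columns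
outside `N(R)`. A row of the least such `R` and a column outside `N` of the greatest one then lie
in every maximum stable set, and they are nonadjacent. -/

open Finset

section StableSets

variable {V : Type*} {G H : SimpleGraph V}

lemma IsStableSet.anti (hGH : G ≤ H) {S : Set V} (hS : IsStableSet H S) : IsStableSet G S :=
  fun _ hu _ hv huv hadj => hS hu hv huv (hGH hadj)

lemma isStableSet_sup_edge_iff {x y : V} (hxy : x ≠ y) {S : Set V} :
    IsStableSet (G ⊔ fromEdgeSet {s(x, y)}) S ↔ IsStableSet G S ∧ ¬ (x ∈ S ∧ y ∈ S) := by
  constructor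
  · intro hS
    refine ⟨hS.anti le_sup_left, fun ⟨hx, hy⟩ => hS hx hy hxy ?_⟩
    exact Or.inr ((fromEdgeSet_adj _).2 ⟨rfl, hxy⟩)
  · rintro ⟨hS, hxyS⟩ u hu v hv huv (hadj | hadj)
    · exact hS hu hv huv hadj
    · rw [fromEdgeSet_adj, Set.mem_singleton_iff, Sym2.eq_iff] at hadj
      rcases hadj.1 with ⟨rfl, rfl⟩ | ⟨rfl, rfl⟩
      exacts [hxyS ⟨hu, hv⟩, hxyS ⟨hv, hu⟩]

lemma stabNum_le {m : ℕ} (h : ∀ S, IsStableSet G S → S.ncard ≤ m) : stabNum G ≤ m :=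
  csSup_le ⟨0, ∅, Set.pairwise_empty _, Set.ncard_empty _⟩ (by rintro _ ⟨S, hS, rfl⟩; exact h S hS)

variable [Finite V]

lemma bddAbove_stableSet_ncard (G : SimpleGraph V) :
    BddAbove {k | ∃ S : Set V, IsStableSet G S ∧ S.ncard = k} :=
  ⟨Nat.card V, by rintro _ ⟨S, -, rfl⟩; exact Set.ncard_le_card S⟩

lemma IsStableSet.ncard_le_stabNum {S : Set V} (hS : IsStableSet G S) : S.ncard ≤ stabNum G :=
  le_csSup (bddAbove_stableSet_ncard G) ⟨S, hS, rfl⟩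

lemma exists_isMaxStableSet (G : SimpleGraph V) : ∃ S, IsMaxStableSet G S := by
  obtain ⟨S, hS, hcard⟩ :=
    Nat.sSup_mem (s := {k | ∃ S : Set V, IsStableSet G S ∧ S.ncard = k})
      ⟨0, ∅, Set.pairwise_empty _, Set.ncard_empty _⟩ (bddAbove_stableSet_ncard G)
  exact ⟨S, hS, hcard⟩

lemma stabNum_anti (hGH : G ≤ H) : stabNum H ≤ stabNum G :=
  stabNum_le fun _ hS => (hS.anti hGH).ncard_le_stabNum

lemma stabNum_sup_edge_eq_iff {x y : V} (hxy : x ≠ y) :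
    stabNum (G ⊔ fromEdgeSet {s(x, y)}) = stabNum G ↔
      ∃ S, IsMaxStableSet G S ∧ ¬ (x ∈ S ∧ y ∈ S) := by
  constructor
  · intro h
    obtain ⟨S, hS, hcard⟩ := exists_isMaxStableSet (G ⊔ fromEdgeSet {s(x, y)})
    obtain ⟨hSG, hxyS⟩ := (isStableSet_sup_edge_iff hxy).1 hS
    exact ⟨S, ⟨hSG, hcard.trans h⟩, hxyS⟩
  · rintro ⟨S, ⟨hS, hcard⟩, hxyS⟩
    refine le_antisymm (stabNum_anti le_sup_left) ?_
    rw [← hcard]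
    exact ((isStableSet_sup_edge_iff hxy).2 ⟨hS, hxyS⟩).ncard_le_stabNum

lemma alphaPlusStable_iff :
    AlphaPlusStable G ↔
      ∀ x y, x ≠ y → ¬ G.Adj x y → ∃ S, IsMaxStableSet G S ∧ ¬ (x ∈ S ∧ y ∈ S) :=
  forall₂_congr fun _ _ => forall_congr' fun hxy => forall_congr' fun _ =>
    stabNum_sup_edge_eq_iff hxy

end StableSets

section FiniteLattice

variable {α : Type*} [Finite α] {s : Set α}

lemma SupClosed.exists_isGreatest [SemilatticeSup α] (hs : SupClosed s) (hne : s.Nonempty) :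
    ∃ a, IsGreatest s a := by
  classical
  let t := (Set.toFinite s).toFinset
  have ht : t.Nonempty := by simpa [t] using hne
  refine ⟨t.sup' ht id, hs.finsetSup'_mem ht fun a ha => by simpa [t] using ha, fun a ha => ?_⟩
  exact le_sup' id (by simpa [t] using ha)

lemma InfClosed.exists_isLeast [SemilatticeInf α] (hs : InfClosed s) (hne : s.Nonempty) :
    ∃ a, IsLeast s a :=
  SupClosed.exists_isGreatest (α := αᵒᵈ) hs hne

end FiniteLattice

namespace Matrix

section Deficiency

variable {ι κ : Type*} [Fintype κ] [DecidableEq κ] (X : Matrix ι κ ℕ)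

def nbhd (R : Finset ι) : Finset κ :=
  R.biUnion fun i => univ.filter fun j => X i j ≠ 0

variable {X}

lemma mem_nbhd {R : Finset ι} {j : κ} : j ∈ X.nbhd R ↔ ∃ i ∈ R, X i j ≠ 0 := by
  simp [nbhd]

lemma nbhd_mono {R R' : Finset ι} (h : R ⊆ R') : X.nbhd R ⊆ X.nbhd R' :=
  biUnion_subset_biUnion_of_subset_left _ h

variable (X) [Fintype ι]

def deficiency : ℕ :=
  (univ : Finset (Finset ι)).sup fun R => #R - #(X.nbhd R)

def IsMaxDeficient (R : Finset ι) : Prop :=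
  #R = #(X.nbhd R) + X.deficiency

lemma card_le_card_nbhd_add_deficiency (R : Finset ι) : #R ≤ #(X.nbhd R) + X.deficiency := by
  have : #R - #(X.nbhd R) ≤ X.deficiency :=
    le_sup (f := fun R => #R - #(X.nbhd R)) (mem_univ R)
  omega

lemma exists_isMaxDeficient : ∃ R, X.IsMaxDeficient R := by
  obtain ⟨R, -, hR⟩ := exists_mem_eq_sup (univ : Finset (Finset ι)) univ_nonempty
    fun R => #R - #(X.nbhd R)
  rcases Nat.eq_zero_or_pos X.deficiency with h | h
  · exact ⟨∅, by simp [IsMaxDeficient, nbhd, h]⟩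
  · exact ⟨R, by unfold IsMaxDeficient deficiency at *; omega⟩

lemma deficiency_eq_zero_iff :
    X.deficiency = 0 ↔ ∃ f : ι → κ, Function.Injective f ∧ ∀ i, X i (f i) ≠ 0 := by
  have hall : X.deficiency = 0 ↔ ∀ R, #R ≤ #(X.nbhd R) :=
    ⟨fun h R => by simpa [h] using X.card_le_card_nbhd_add_deficiency R,
      fun h => Nat.eq_zero_of_le_zero (Finset.sup_le fun R _ => (Nat.sub_eq_zero_of_le (h R)).le)⟩
  unfold nbhd at hall
  rw [hall, all_card_le_biUnion_card_iff_exists_injective]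
  simp

variable {X} [DecidableEq ι]

lemma IsMaxDeficient.union_inter {R R' : Finset ι} (hR : X.IsMaxDeficient R)
    (hR' : X.IsMaxDeficient R') : X.IsMaxDeficient (R ∪ R') ∧ X.IsMaxDeficient (R ∩ R') := by
  unfold IsMaxDeficient at *
  have hunion : X.nbhd (R ∪ R') = X.nbhd R ∪ X.nbhd R' := union_biUnion
  have hinter : #(X.nbhd (R ∩ R')) ≤ #(X.nbhd R ∩ X.nbhd R') :=
    card_le_card (subset_inter (nbhd_mono inter_subset_left) (nbhd_mono inter_subset_right))
  have h1 := card_union_add_card_inter R R'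
  have h2 := card_union_add_card_inter (X.nbhd R) (X.nbhd R')
  have h3 := X.card_le_card_nbhd_add_deficiency (R ∪ R')
  have h4 := X.card_le_card_nbhd_add_deficiency (R ∩ R')
  rw [hunion] at h3 ⊢
  constructor <;> omega

variable (X) in
lemma supClosed_isMaxDeficient : SupClosed {R | X.IsMaxDeficient R} :=
  fun _ hR _ hR' => (hR.union_inter hR').1

variable (X) in
lemma infClosed_isMaxDeficient : InfClosed {R | X.IsMaxDeficient R} :=
  fun _ hR _ hR' => (hR.union_inter hR').2

end Deficiency

end Matrix

section MatGraph

variable {ι κ : Type*} {X : Matrix ι κ ℕ}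

@[simp]
lemma matGraph_adj_inl_inr {i : ι} {j : κ} :
    (matGraph X).Adj (Sum.inl i) (Sum.inr j) ↔ X i j = 1 := by
  simp [matGraph, fromRel_adj]

@[simp]
lemma matGraph_not_adj_inl_inl {i i' : ι} : ¬ (matGraph X).Adj (Sum.inl i) (Sum.inl i') := by
  simp [matGraph, fromRel_adj]

@[simp]
lemma matGraph_not_adj_inr_inr {j j' : κ} : ¬ (matGraph X).Adj (Sum.inr j) (Sum.inr j') := by
  simp [matGraph, fromRel_adj]

variable (X)

lemma isStableSet_range_inl : IsStableSet (matGraph X) (Set.range Sum.inl) := by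
  rintro _ ⟨i, rfl⟩ _ ⟨i', rfl⟩ - h
  exact matGraph_not_adj_inl_inl h

lemma isStableSet_range_inr : IsStableSet (matGraph X) (Set.range Sum.inr) := by
  rintro _ ⟨j, rfl⟩ _ ⟨j', rfl⟩ - h
  exact matGraph_not_adj_inr_inr h

variable {X}

lemma isStableSet_matGraph_iff (h01 : ZeroOne X) {S : Set (ι ⊕ κ)} :
    IsStableSet (matGraph X) S ↔ ∀ i j, Sum.inl i ∈ S → Sum.inr j ∈ S → X i j = 0 := by
  have hne {i j} : X i j ≠ 1 ↔ X i j = 0 := by rcases h01 i j with h | h <;> simp [h]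
  constructor
  · intro hS i j hi hj
    exact hne.1 fun h => hS hi hj Sum.inl_ne_inr (matGraph_adj_inl_inr.2 h)
  · rintro h (i | j) hu (i' | j') hv - hadj
    · exact matGraph_not_adj_inl_inl hadj
    · exact hne.2 (h i j' hu hv) (matGraph_adj_inl_inr.1 hadj)
    · exact hne.2 (h i' j hv hu) (matGraph_adj_inl_inr.1 hadj.symm)
    · exact matGraph_not_adj_inr_inr hadj

variable [Fintype κ] [DecidableEq κ]

lemma isStableSet_coe_matGraph_iff (h01 : ZeroOne X) {s : Finset (ι ⊕ κ)} :
    IsStableSet (matGraph X) ↑s ↔ Disjoint (X.nbhd s.toLeft) s.toRight := by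
  rw [isStableSet_matGraph_iff h01, Finset.disjoint_left]
  constructor
  · rintro h j hj hjs
    obtain ⟨i, hi, hij⟩ := Matrix.mem_nbhd.1 hj
    exact hij (h i j (mem_toLeft.1 hi) (mem_toRight.1 hjs))
  · intro h i j hi hj
    by_contra hij
    exact h (Matrix.mem_nbhd.2 ⟨i, mem_toLeft.2 hi, hij⟩) (mem_toRight.2 hj)

variable [Fintype ι]

variable (X) in
lemma stabNum_matGraph (h01 : ZeroOne X) :
    stabNum (matGraph X) = Fintype.card κ + X.deficiency := by
  refine le_antisymm (stabNum_le fun S hS => ?_) ?_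
  · obtain ⟨s, rfl⟩ := (Set.toFinite S).exists_finset_coe
    have hcols := card_union_of_disjoint ((isStableSet_coe_matGraph_iff h01).1 hS)
    have := card_le_univ (X.nbhd s.toLeft ∪ s.toRight)
    have := X.card_le_card_nbhd_add_deficiency s.toLeft
    rw [Set.ncard_coe_finset, ← card_toLeft_add_card_toRight]
    omega
  · obtain ⟨R, hR⟩ := X.exists_isMaxDeficient
    have hS : IsStableSet (matGraph X) ↑(R.disjSum (X.nbhd R)ᶜ) := by
      rw [isStableSet_coe_matGraph_iff h01, toLeft_disjSum, toRight_disjSum]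
      exact disjoint_compl_right
    have hcard := hS.ncard_le_stabNum
    have := card_le_univ (X.nbhd R)
    rw [Set.ncard_coe_finset, card_disjSum, card_compl] at hcard
    unfold Matrix.IsMaxDeficient at hR
    omega

lemma IsMaxStableSet.isMaxDeficient_toLeft (h01 : ZeroOne X) {s : Finset (ι ⊕ κ)}
    (hs : IsMaxStableSet (matGraph X) ↑s) :
    X.IsMaxDeficient s.toLeft ∧ s.toRight = (X.nbhd s.toLeft)ᶜ := by
  obtain ⟨hstable, hcard⟩ := hs
  have hdisj := (isStableSet_coe_matGraph_iff h01).1 hstable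
  have hsub : s.toRight ⊆ (X.nbhd s.toLeft)ᶜ := subset_compl_iff_disjoint_left.2 hdisj
  have := card_le_card hsub
  have := card_le_univ (X.nbhd s.toLeft)
  have := X.card_le_card_nbhd_add_deficiency s.toLeft
  rw [Set.ncard_coe_finset, stabNum_matGraph X h01, ← card_toLeft_add_card_toRight] at hcard
  rw [card_compl] at *
  refine ⟨by unfold Matrix.IsMaxDeficient; omega, eq_of_subset_of_card_le hsub ?_⟩
  rw [card_compl]
  omega

variable [DecidableEq ι]

lemma exists_forall_isMaxStableSet_mem (h01 : ZeroOne X)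
    (hcard : Fintype.card ι ≤ Fintype.card κ) (hd : 0 < X.deficiency) :
    ∃ i j, X i j = 0 ∧
      ∀ S, IsMaxStableSet (matGraph X) S → Sum.inl i ∈ S ∧ Sum.inr j ∈ S := by
  obtain ⟨I, hI, hIleast⟩ := X.infClosed_isMaxDeficient.exists_isLeast X.exists_isMaxDeficient
  obtain ⟨D, hD, hDgreatest⟩ :=
    X.supClosed_isMaxDeficient.exists_isGreatest X.exists_isMaxDeficient
  have hI : X.IsMaxDeficient I := hI
  have hD : X.IsMaxDeficient D := hD
  obtain ⟨i, hi⟩ : I.Nonempty := by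
    rw [← card_pos]; unfold Matrix.IsMaxDeficient at hI; omega
  obtain ⟨j, hj⟩ : (X.nbhd D)ᶜ.Nonempty := by
    have := card_le_univ D
    rw [← card_pos, card_compl]; unfold Matrix.IsMaxDeficient at hD; omega
  rw [mem_compl] at hj
  refine ⟨i, j, ?_, fun S hS => ?_⟩
  · by_contra hij
    exact hj (Matrix.mem_nbhd.2 ⟨i, hIleast hD hi, hij⟩)
  · obtain ⟨s, rfl⟩ := (Set.toFinite S).exists_finset_coe
    obtain ⟨hR, hcols⟩ := hS.isMaxDeficient_toLeft h01
    refine ⟨mem_toLeft.1 (hIleast hR hi), mem_toRight.1 ?_⟩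
    rw [hcols, mem_compl]
    exact fun hjR => hj (Matrix.nbhd_mono (hDgreatest hR) hjR)

lemma alphaPlusStable_matGraph_iff (h01 : ZeroOne X)
    (hcard : Fintype.card ι = Fintype.card κ) :
    AlphaPlusStable (matGraph X) ↔ X.deficiency = 0 := by
  rw [alphaPlusStable_iff]
  constructor
  · intro h
    by_contra hd
    obtain ⟨i, j, hij, hmem⟩ :=
      exists_forall_isMaxStableSet_mem h01 hcard.le (Nat.pos_of_ne_zero hd)
    obtain ⟨S, hS, hij'⟩ := h (Sum.inl i) (Sum.inr j) Sum.inl_ne_inr (by simp [hij])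
    exact hij' (hmem S hS)
  · rintro hd x y - -
    have hα : stabNum (matGraph X) = Fintype.card κ := by simp [stabNum_matGraph X h01, hd]
    rcases y with i | j
    · refine ⟨Set.range Sum.inr, ⟨isStableSet_range_inr X, ?_⟩, fun h => by simpa using h.2⟩
      rw [Set.ncard_range_of_injective Sum.inr_injective, hα, Nat.card_eq_fintype_card]
    · refine ⟨Set.range Sum.inl, ⟨isStableSet_range_inl X, ?_⟩, fun h => by simpa using h.2⟩
      rw [Set.ncard_range_of_injective Sum.inl_injective, hα, Nat.card_eq_fintype_card, hcard]

end MatGraph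

section Square

variable {m : Type*} [Fintype m] (X : Matrix m m ℕ)

lemma Matrix.deficiency_eq_zero_iff_exists_perm [DecidableEq m] :
    X.deficiency = 0 ↔ ∃ σ : Equiv.Perm m, ∀ i, X i (σ i) ≠ 0 := by
  rw [X.deficiency_eq_zero_iff]
  constructor
  · rintro ⟨f, hf, hX⟩
    exact ⟨Equiv.ofBijective f (Finite.injective_iff_bijective.1 hf), hX⟩
  · rintro ⟨σ, hσ⟩
    exact ⟨σ, σ.injective, hσ⟩

lemma termRank_eq_card_iff :
    termRank X = Fintype.card m ↔ ∃ σ : Equiv.Perm m, ∀ i, X i (σ i) ≠ 0 := by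
  set T := {r | ∃ (f : Fin r ↪ m) (g : Fin r ↪ m), ∀ i, X (f i) (g i) ≠ 0}
  have hbdd : ∀ r ∈ T, r ≤ Fintype.card m := by
    rintro r ⟨f, -, -⟩
    simpa using Fintype.card_le_of_embedding f
  constructor
  · intro h
    have hmem : termRank X ∈ T :=
      Nat.sSup_mem ⟨0, Function.Embedding.ofIsEmpty, Function.Embedding.ofIsEmpty, finZeroElim⟩
        ⟨_, hbdd⟩
    rw [h] at hmem
    obtain ⟨f, g, hfg⟩ := hmem
    have bij (e : Fin (Fintype.card m) ↪ m) : Function.Bijective e :=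
      (Fintype.bijective_iff_injective_and_card e).2 ⟨e.injective, by simp⟩
    let ef := Equiv.ofBijective f (bij f)
    refine ⟨ef.symm.trans (Equiv.ofBijective g (bij g)), fun i => ?_⟩
    have hf : f (ef.symm i) = i := ef.apply_symm_apply i
    simpa [hf] using hfg (ef.symm i)
  · rintro ⟨σ, hσ⟩
    let e := (Fintype.equivFin m).symm.toEmbedding
    refine le_antisymm (csSup_le ⟨_, e, e.trans σ.toEmbedding, fun k => hσ (e k)⟩ hbdd) ?_
    exact le_csSup ⟨_, hbdd⟩ ⟨e, e.trans σ.toEmbedding, fun k => hσ (e k)⟩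

lemma perm_pos_iff [DecidableEq m] : 0 < perm X ↔ ∃ σ : Equiv.Perm m, ∀ i, X i (σ i) ≠ 0 := by
  rw [perm, sum_pos_iff]
  simp only [mem_univ, true_and, pos_iff_ne_zero, ne_eq, prod_eq_zero_iff, not_exists]
  constructor
  · rintro ⟨τ, hτ⟩
    exact ⟨τ⁻¹, fun i => by simpa using hτ (τ⁻¹ i)⟩
  · rintro ⟨σ, hσ⟩
    exact ⟨σ⁻¹, fun i => by simpa using hσ (σ⁻¹ i)⟩

end Square

/-- Let `G` be the balanced bipartite graph on `2n` vertices with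
reduced adjacency matrix `X`. TFAE: (i) `G` is α⁺-stable; (ii) `X` has a nonzero
diagonal; (iii) the term rank of `X` equals `n`; (iv) `per X > 0`. -/
theorem stmt_13 {n : ℕ} (X : Matrix (Fin n) (Fin n) ℕ) (h01 : ZeroOne X) :
    List.TFAE
      [AlphaPlusStable (matGraph X),
       ∃ σ : Equiv.Perm (Fin n), ∀ i, X i (σ i) ≠ 0,
       termRank X = n,
       0 < perm X] := by
  tfae_have 1 ↔ 2 :=
    (alphaPlusStable_matGraph_iff h01 rfl).trans X.deficiency_eq_zero_iff_exists_perm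
  tfae_have 3 ↔ 2 := by simpa using termRank_eq_card_iff X
  tfae_have 4 ↔ 2 := perm_pos_iff X
  tfae_finish
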